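/- arXiv:1004.5254 — 9 statements merged into one kernel-verified Lean document; each statement's English description precedes it below -/
import Mathlib

section
/- Let p be a positive integer and f : (0, ε₀] → ℂ a function. The following are equivalent: (i) there exist constants C, L > 0 such that |f(ε)| ≤ C·L^N·Γ(N/p + 1)·ε^N for every natural number N and every ε ∈ (0, ε₀]; (ii) there exist constants C', A > 0 such that |f(ε)| ≤ C'·exp(-A/ε^p) for every ε ∈ (0, ε₀]. Moreover, in the direction (i) ⇒ (ii) one may take any A < L^{-p}, and in (ii) ⇒ (i) any L > A^{-1/p}. -/
/-!
Taking `N = p n` turns the Gevrey bounds into `‖f ε‖ ≤ C ((L ε) ^ p) ^ n n!`; multiplying by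
`x ^ n / n!` with `x = A / ε ^ p` and summing over `n` gives `‖f ε‖ e ^ x ≤ C ∑ (A L ^ p) ^ n`,
a convergent geometric series as soon as `A L ^ p < 1`. Conversely, `x ^ s e ^ (-x) ≤ Γ(s + 1)`
(keep only the part of the Gamma integral beyond `x`, where `t ^ s ≥ x ^ s`), applied with
`x = A / ε ^ p` and `s = N / p`, reads `e ^ (-A / ε ^ p) ≤ (A ^ (-1 / p)) ^ N Γ(N / p + 1) ε ^ N`.
-/

open MeasureTheory Set Real
open scoped Nat

theorem Real.rpow_mul_exp_neg_le_Gamma_add_one {s x : ℝ} (hs : 0 ≤ s) (hx : 0 < x) :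
    x ^ s * exp (-x) ≤ Gamma (s + 1) := by
  have hs1 : 0 < s + 1 := by linarith
  have hint₀ := GammaIntegral_convergent hs1
  rw [add_sub_cancel_right] at hint₀
  have hint := hint₀.mono_set (Ioi_subset_Ioi hx.le)
  calc x ^ s * exp (-x) = ∫ t in Ioi x, exp (-t) * x ^ s := by
        rw [integral_mul_const, integral_exp_neg_Ioi, mul_comm]
    _ ≤ ∫ t in Ioi x, exp (-t) * t ^ s := by
        refine setIntegral_mono_on ?_ hint measurableSet_Ioi fun t ht => ?_
        · simpa [IntegrableOn] using (exp_neg_integrableOn_Ioi x one_pos).mul_const (x ^ s)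
        · gcongr
          exact mem_Ioi.mp ht |>.le
    _ ≤ ∫ t in Ioi 0, exp (-t) * t ^ s := by
        refine setIntegral_mono_set hint₀ ?_ (Ioi_subset_Ioi hx.le).eventuallyLE
        filter_upwards [ae_restrict_mem measurableSet_Ioi] with t ht
        exact mul_nonneg (exp_pos _).le (rpow_nonneg (mem_Ioi.mp ht).le _)
    _ = Gamma (s + 1) := by rw [Gamma_eq_integral hs1, add_sub_cancel_right]

theorem exp_neg_div_pow_le_pow_mul_Gamma_mul_pow {p : ℕ} (hp : p ≠ 0) {A ε : ℝ} (hA : 0 < A)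
    (hε : 0 < ε) (N : ℕ) :
    exp (-A / ε ^ p) ≤ (A ^ (-(1 : ℝ) / p)) ^ N * Gamma ((N : ℝ) / p + 1) * ε ^ N := by
  have hx : 0 < A / ε ^ p := by positivity
  have hinv : (A / ε ^ p) ^ ((N : ℝ) / p) * ((A ^ (-(1 : ℝ) / p)) ^ N * ε ^ N) = 1 := by
    rw [div_rpow hA.le (by positivity), ← rpow_natCast, ← rpow_natCast, ← rpow_natCast,
      ← rpow_mul hε.le, ← rpow_mul hA.le]
    have hN : (p : ℝ) * (N / p) = N := mul_div_cancel₀ _ (Nat.cast_ne_zero.mpr hp)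
    rw [hN, div_mul_eq_mul_div, mul_div_assoc, mul_div_cancel_right₀ _ (by positivity),
      ← rpow_add hA, show (N : ℝ) / p + -1 / p * N = 0 by ring, rpow_zero]
  calc exp (-A / ε ^ p)
      = (A / ε ^ p) ^ ((N : ℝ) / p) * exp (-(A / ε ^ p)) *
          ((A ^ (-(1 : ℝ) / p)) ^ N * ε ^ N) := by
        rw [mul_right_comm, hinv, one_mul, neg_div]
    _ ≤ Gamma ((N : ℝ) / p + 1) * ((A ^ (-(1 : ℝ) / p)) ^ N * ε ^ N) := by
        gcongr
        exact rpow_mul_exp_neg_le_Gamma_add_one (by positivity) hx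
    _ = _ := by ring

theorem le_div_mul_exp_neg_of_forall_le_pow_mul_factorial {a C r θ : ℝ} (hr : 0 < r)
    (hθ₀ : 0 ≤ θ) (hθ₁ : θ < 1) (h : ∀ n : ℕ, a ≤ C * r ^ n * n !) :
    a ≤ C / (1 - θ) * exp (-(θ / r)) := by
  have hterm (n : ℕ) : a * ((θ / r) ^ n / n !) ≤ C * θ ^ n :=
    calc a * ((θ / r) ^ n / n !) ≤ C * r ^ n * n ! * ((θ / r) ^ n / n !) := by
          gcongr
          exact h n
      _ = C * θ ^ n := by rw [div_pow]; field_simp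
  have hexp : HasSum (fun n : ℕ => a * ((θ / r) ^ n / n !)) (a * exp (θ / r)) := by
    rw [exp_eq_exp_ℝ]
    exact (NormedSpace.expSeries_div_hasSum_exp _).mul_left a
  have hsum := hasSum_le hterm hexp ((hasSum_geometric_of_lt_one hθ₀ hθ₁).mul_left C)
  rw [exp_neg, ← div_eq_mul_inv, le_div_iff₀ (exp_pos _), div_eq_mul_inv]
  exact hsum

theorem le_div_mul_exp_neg_div_pow_of_forall_le_gevrey {p : ℕ} (hp : p ≠ 0) {a C L A ε : ℝ}
    (hL : 0 < L) (hA : 0 ≤ A) (hAL : A * L ^ p < 1) (hε : 0 < ε)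
    (h : ∀ N : ℕ, a ≤ C * L ^ N * Gamma ((N : ℝ) / p + 1) * ε ^ N) :
    a ≤ C / (1 - A * L ^ p) * exp (-A / ε ^ p) := by
  have hr : 0 < (L * ε) ^ p := by positivity
  have hexponent : A * L ^ p / (L * ε) ^ p = A / ε ^ p := by
    rw [mul_pow]; field_simp
  rw [neg_div, ← hexponent]
  refine le_div_mul_exp_neg_of_forall_le_pow_mul_factorial hr (by positivity) hAL fun n => ?_
  have hΓ : Gamma (((p * n : ℕ) : ℝ) / p + 1) = n ! := by
    rw [Nat.cast_mul, mul_div_cancel_left₀ _ (Nat.cast_ne_zero.mpr hp), Gamma_nat_eq_factorial]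
  calc a ≤ C * L ^ (p * n) * Gamma (((p * n : ℕ) : ℝ) / p + 1) * ε ^ (p * n) := h (p * n)
    _ = C * ((L * ε) ^ p) ^ n * n ! := by rw [hΓ, mul_pow, pow_mul, pow_mul]; ring

section

variable {E : Type*} [Norm E] {p : ℕ} {s : Set ℝ} {f : ℝ → E}

theorem exists_exp_small_of_gevrey_flat (hp : p ≠ 0) (hs : s ⊆ Ioi 0) {C L : ℝ}
    (hC : 0 < C) (hL : 0 < L)
    (hf : ∀ N : ℕ, ∀ ε ∈ s, ‖f ε‖ ≤ C * L ^ N * Gamma ((N : ℝ) / p + 1) * ε ^ N)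
    {A : ℝ} (hA : 0 ≤ A) (hAL : A < L ^ (-(p : ℝ))) :
    ∃ C' : ℝ, 0 < C' ∧ ∀ ε ∈ s, ‖f ε‖ ≤ C' * exp (-A / ε ^ p) := by
  have hAL' : A * L ^ p < 1 := by
    rwa [rpow_neg hL.le, rpow_natCast, inv_eq_one_div, lt_div_iff₀ (pow_pos hL p)] at hAL
  exact ⟨C / (1 - A * L ^ p), div_pos hC (sub_pos.mpr hAL'), fun ε hε =>
    le_div_mul_exp_neg_div_pow_of_forall_le_gevrey hp hL hA hAL' (hs hε) (hf · ε hε)⟩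

theorem exists_gevrey_flat_of_exp_small (hp : p ≠ 0) (hs : s ⊆ Ioi 0) {C' A : ℝ} (hC' : 0 < C')
    (hA : 0 < A) (hf : ∀ ε ∈ s, ‖f ε‖ ≤ C' * exp (-A / ε ^ p))
    {L : ℝ} (hL : A ^ (-(1 : ℝ) / p) ≤ L) :
    ∃ C : ℝ, 0 < C ∧ ∀ N : ℕ, ∀ ε ∈ s,
      ‖f ε‖ ≤ C * L ^ N * Gamma ((N : ℝ) / p + 1) * ε ^ N := by
  refine ⟨C', hC', fun N ε hε => ?_⟩
  have hε_pos : 0 < ε := hs hε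
  calc ‖f ε‖ ≤ C' * exp (-A / ε ^ p) := hf ε hε
    _ ≤ C' * ((A ^ (-(1 : ℝ) / p)) ^ N * Gamma ((N : ℝ) / p + 1) * ε ^ N) := by
        gcongr; exact exp_neg_div_pow_le_pow_mul_Gamma_mul_pow hp hA hε_pos N
    _ ≤ C' * (L ^ N * Gamma ((N : ℝ) / p + 1) * ε ^ N) := by
        have hΓ := Gamma_pos_of_pos (by positivity : (0 : ℝ) < N / p + 1)
        gcongr
    _ = C' * L ^ N * Gamma ((N : ℝ) / p + 1) * ε ^ N := by ring

end

theorem gevrey_flat_iff_exp_small_general (p : ℕ) (hp : 0 < p) (ε₀ : ℝ) (f : ℝ → ℂ) :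
    ((∃ C L : ℝ, 0 < C ∧ 0 < L ∧ ∀ N : ℕ, ∀ ε ∈ Set.Ioc (0 : ℝ) ε₀,
        ‖f ε‖ ≤ C * L ^ N * Real.Gamma ((N : ℝ) / p + 1) * ε ^ N) ↔
      (∃ C' A : ℝ, 0 < C' ∧ 0 < A ∧ ∀ ε ∈ Set.Ioc (0 : ℝ) ε₀,
        ‖f ε‖ ≤ C' * Real.exp (-A / ε ^ p))) ∧
    (∀ C L : ℝ, 0 < C → 0 < L →
      (∀ N : ℕ, ∀ ε ∈ Set.Ioc (0 : ℝ) ε₀,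
        ‖f ε‖ ≤ C * L ^ N * Real.Gamma ((N : ℝ) / p + 1) * ε ^ N) →
      ∀ A : ℝ, 0 < A → A < L ^ (-(p : ℝ)) →
        ∃ C' : ℝ, 0 < C' ∧ ∀ ε ∈ Set.Ioc (0 : ℝ) ε₀,
          ‖f ε‖ ≤ C' * Real.exp (-A / ε ^ p)) ∧
    (∀ C' A : ℝ, 0 < C' → 0 < A →
      (∀ ε ∈ Set.Ioc (0 : ℝ) ε₀, ‖f ε‖ ≤ C' * Real.exp (-A / ε ^ p)) →
      ∀ L : ℝ, A ^ (-(1 : ℝ) / p) < L →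
        ∃ C : ℝ, 0 < C ∧ ∀ N : ℕ, ∀ ε ∈ Set.Ioc (0 : ℝ) ε₀,
          ‖f ε‖ ≤ C * L ^ N * Real.Gamma ((N : ℝ) / p + 1) * ε ^ N) := by
  have hs : Ioc 0 ε₀ ⊆ Ioi 0 := Ioc_subset_Ioi_self
  refine ⟨⟨?_, ?_⟩,
    fun C L hC hL hf A hA hAL => exists_exp_small_of_gevrey_flat hp.ne' hs hC hL hf hA.le hAL,
    fun C' A hC' hA hf L hL => exists_gevrey_flat_of_exp_small hp.ne' hs hC' hA hf hL.le⟩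
  · rintro ⟨C, L, hC, hL, hf⟩
    have hLp : 0 < L ^ (-(p : ℝ)) := rpow_pos_of_pos hL _
    obtain ⟨C', hC', hf'⟩ :=
      exists_exp_small_of_gevrey_flat hp.ne' hs hC hL hf (half_pos hLp).le (half_lt_self hLp)
    exact ⟨C', _, hC', half_pos hLp, hf'⟩
  · rintro ⟨C', A, hC', hA, hf⟩
    obtain ⟨C, hC, hf'⟩ := exists_gevrey_flat_of_exp_small hp.ne' hs hC' hA hf le_rfl
    exact ⟨C, _, hC, rpow_pos_of_pos hA _, hf'⟩

/-- Equivalence between Gevrey-flatness of order `1/p` and exponential smallness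
of order `p`, with the announced relations between the constants: from Gevrey
type `L` one gets any exponential rate `A < L^{-p}`, and from exponential rate
`A` one gets any Gevrey type `L > A^{-1/p}`. -/
theorem gevrey_flat_iff_exp_small (p : ℕ) (hp : 0 < p) (ε₀ : ℝ) (hε₀ : 0 < ε₀) (f : ℝ → ℂ) :
    ((∃ C L : ℝ, 0 < C ∧ 0 < L ∧ ∀ N : ℕ, ∀ ε ∈ Set.Ioc (0 : ℝ) ε₀,
        ‖f ε‖ ≤ C * L ^ N * Real.Gamma ((N : ℝ) / p + 1) * ε ^ N) ↔
      (∃ C' A : ℝ, 0 < C' ∧ 0 < A ∧ ∀ ε ∈ Set.Ioc (0 : ℝ) ε₀,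
        ‖f ε‖ ≤ C' * Real.exp (-A / ε ^ p))) ∧
    (∀ C L : ℝ, 0 < C → 0 < L →
      (∀ N : ℕ, ∀ ε ∈ Set.Ioc (0 : ℝ) ε₀,
        ‖f ε‖ ≤ C * L ^ N * Real.Gamma ((N : ℝ) / p + 1) * ε ^ N) →
      ∀ A : ℝ, 0 < A → A < L ^ (-(p : ℝ)) →
        ∃ C' : ℝ, 0 < C' ∧ ∀ ε ∈ Set.Ioc (0 : ℝ) ε₀,
          ‖f ε‖ ≤ C' * Real.exp (-A / ε ^ p)) ∧
    (∀ C' A : ℝ, 0 < C' → 0 < A →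
      (∀ ε ∈ Set.Ioc (0 : ℝ) ε₀, ‖f ε‖ ≤ C' * Real.exp (-A / ε ^ p)) →
      ∀ L : ℝ, A ^ (-(1 : ℝ) / p) < L →
        ∃ C : ℝ, 0 < C ∧ ∀ N : ℕ, ∀ ε ∈ Set.Ioc (0 : ℝ) ε₀,
          ‖f ε‖ ≤ C * L ^ N * Real.Gamma ((N : ℝ) / p + 1) * ε ^ N) :=
  gevrey_flat_iff_exp_small_general p hp ε₀ f
end

section
/- Let p be a positive integer and g : [1, ∞) → ℂ. Suppose there exist constants C, L > 0 such that |g(X)| ≤ C·L^M·Γ(M/p + 1)·X^{-M} for every natural number M and every X ≥ 1. Then for every B with 0 < B < L^{-p} there exists a constant C' such that |g(X)| ≤ C'·exp(-B·X^p) for all X ≥ 1. -/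
open Real
open scoped Nat

/-!
Put `t = (X / L) ^ p` and `θ = B L ^ p < 1`. Taking `M = p k` in the Gevrey estimate gives
`‖g X‖ t ^ k / k ! ≤ C` for every `k`; multiplying by `θ ^ k` and summing over `k` yields
`‖g X‖ exp (θ t) ≤ C / (1 - θ)`, and `θ t = B X ^ p`. Summing the whole exponential series
replaces the optimisation over `M`.
-/

theorem mul_exp_mul_le_of_forall_mul_pow_le_factorial {a C θ u : ℝ} (hθ₀ : 0 ≤ θ) (hθ₁ : θ < 1)
    (h : ∀ k : ℕ, a * u ^ k ≤ C * k !) : a * exp (θ * u) ≤ C / (1 - θ) := by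
  have hexp : HasSum (fun k : ℕ => a * ((θ * u) ^ k / k !)) (a * exp (θ * u)) := by
    rw [exp_eq_exp_ℝ]
    exact (NormedSpace.expSeries_div_hasSum_exp (θ * u)).mul_left a
  have hgeom : HasSum (fun k : ℕ => C * θ ^ k) (C / (1 - θ)) := by
    simpa [div_eq_mul_inv] using (hasSum_geometric_of_lt_one hθ₀ hθ₁).mul_left C
  refine hasSum_le (fun k => ?_) hexp hgeom
  calc a * ((θ * u) ^ k / k !) = θ ^ k / k ! * (a * u ^ k) := by ring
    _ ≤ θ ^ k / k ! * (C * k !) := mul_le_mul_of_nonneg_left (h k) (by positivity)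
    _ = C * θ ^ k := by field_simp

theorem pow_mul_Gamma_mul_rpow_neg_eq {p : ℕ} (hp : p ≠ 0) (k : ℕ) {L X : ℝ}
    (hX : 0 ≤ X) :
    L ^ (p * k) * Gamma (((p * k : ℕ) : ℝ) / p + 1) * X ^ (-((p * k : ℕ) : ℝ)) =
      k ! / ((X / L) ^ p) ^ k := by
  have hk : ((p * k : ℕ) : ℝ) / p = k := by push_cast; field_simp
  rw [hk, Gamma_nat_eq_factorial, rpow_neg hX, rpow_natCast, ← pow_mul, div_pow]
  field_simp

/-- A function on `[1, ∞)` whose asymptotic expansion at infinity vanishes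
with compatible Gevrey estimates of order `1/p` and type `L` decays like
`exp(-B·X^p)` for every `0 < B < L^{-p}`. -/
theorem gevrey_flat_at_infinity_exp_decay (p : ℕ) (hp : 0 < p) (g : ℝ → ℂ)
    (C L : ℝ) (hC : 0 < C) (hL : 0 < L)
    (h : ∀ M : ℕ, ∀ X : ℝ, 1 ≤ X →
      ‖g X‖ ≤ C * L ^ M * Real.Gamma ((M : ℝ) / p + 1) * X ^ (-(M : ℝ)))
    (B : ℝ) (hB0 : 0 < B) (hB : B < L ^ (-(p : ℝ))) :
    ∃ C' : ℝ, 0 < C' ∧ ∀ X : ℝ, 1 ≤ X → ‖g X‖ ≤ C' * Real.exp (-B * X ^ p) := by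
  have hθ : B * L ^ p < 1 := by
    rw [rpow_neg hL.le, rpow_natCast] at hB
    have hLp : 0 < L ^ p := by positivity
    simpa [inv_mul_cancel₀ hLp.ne'] using mul_lt_mul_of_pos_right hB hLp
  refine ⟨C / (1 - B * L ^ p), div_pos hC (by linarith), fun X hX => ?_⟩
  have hX₀ : 0 < X := one_pos.trans_le hX
  have hdecay : ‖g X‖ * exp (B * L ^ p * (X / L) ^ p) ≤ C / (1 - B * L ^ p) := by
    refine mul_exp_mul_le_of_forall_mul_pow_le_factorial (by positivity) hθ fun k => ?_
    have hk := h (p * k) X hX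
    rw [mul_assoc C, mul_assoc C, pow_mul_Gamma_mul_rpow_neg_eq hp.ne' k hX₀.le] at hk
    rwa [← mul_div_assoc, le_div_iff₀ (by positivity)] at hk
  have hexponent : B * L ^ p * (X / L) ^ p = B * X ^ p := by
    rw [mul_assoc, ← mul_pow, mul_div_cancel₀ _ hL.ne']
  rw [hexponent] at hdecay
  rwa [neg_mul, exp_neg, ← div_eq_mul_inv, le_div_iff₀ (exp_pos _)]
end

section
/- Define U⁻(X) = e^{X²} ∫_{-∞}^X e^{-T²} dT. Then for every X < 0, |U⁻(X) + 1/(2X)| ≤ 1/(4|X|³). -/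
/-!
Writing `e^{-T²} = -(1/(2T)) (e^{-T²})'` and integrating by parts on `(-∞, X]` gives
`U⁻(X) = -1/(2X) - R(X)` with `R(X) = e^{X²} ∫_{-∞}^X e^{-T²}/(2T²) dT ≥ 0`, which also yields
`U⁻(X) ≤ 1/(2|X|)`. Since `T² ≥ X²` on the range of integration, `R(X) ≤ U⁻(X)/(2X²)`, so
`0 ≤ R(X) ≤ 1/(4|X|³)`.
-/

open MeasureTheory Set Filter Real Topology

/-- The special function `U⁻(X) = e^{X²} ∫_{-∞}^X e^{-T²} dT`. -/
noncomputable def Uminus (X : ℝ) : ℝ :=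
  Real.exp (X ^ 2) * ∫ T in Set.Iio X, Real.exp (-T ^ 2)

noncomputable def UminusRemainder (X : ℝ) : ℝ :=
  exp (X ^ 2) * ∫ T in Iio X, exp (-T ^ 2) / (2 * T ^ 2)

theorem integrable_exp_neg_sq : Integrable fun T : ℝ => exp (-T ^ 2) := by
  simpa using integrable_exp_neg_mul_sq one_pos

theorem hasDerivAt_neg_exp_neg_sq_div_two_mul {x : ℝ} (hx : x ≠ 0) :
    HasDerivAt (fun T : ℝ => -exp (-T ^ 2) / (2 * T))
      (exp (-x ^ 2) + exp (-x ^ 2) / (2 * x ^ 2)) x := by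
  have hexp : HasDerivAt (fun T : ℝ => -exp (-T ^ 2)) (2 * x * exp (-x ^ 2)) x := by
    have hsq : HasDerivAt (fun T : ℝ => -T ^ 2) (-(2 * x)) x := by
      simpa using (hasDerivAt_pow 2 x).fun_neg
    simpa [mul_comm, Function.comp_def] using ((hasDerivAt_exp (-x ^ 2)).comp x hsq).fun_neg
  have hlin : HasDerivAt (fun T : ℝ => 2 * T) 2 x := by
    simpa using (hasDerivAt_id x).const_mul 2
  refine (hexp.fun_div hlin (by simpa using hx)).congr_deriv ?_
  field_simp
  ring

theorem tendsto_neg_exp_neg_sq_div_two_mul_atBot :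
    Tendsto (fun T : ℝ => -exp (-T ^ 2) / (2 * T)) atBot (𝓝 0) := by
  have hsq : Tendsto (fun T : ℝ => -T ^ 2) atBot atBot := by
    have := (tendsto_pow_atTop two_ne_zero).comp (tendsto_neg_atBot_atTop (G := ℝ))
    simpa only [Function.comp_def, neg_sq] using tendsto_neg_atTop_atBot.comp this
  have hexp : Tendsto (fun T : ℝ => -exp (-T ^ 2)) atBot (𝓝 0) := by
    simpa using (tendsto_exp_atBot.comp hsq).neg
  exact hexp.div_atBot (tendsto_id.const_mul_atBot two_pos)

theorem exp_neg_sq_div_sq_le {T X : ℝ} (hTX : T ≤ X) (hX : X < 0) :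
    exp (-T ^ 2) / (2 * T ^ 2) ≤ exp (-T ^ 2) / (2 * X ^ 2) := by
  have : X ≠ 0 := hX.ne
  refine div_le_div_of_nonneg_left (exp_pos _).le (by positivity) ?_
  nlinarith

theorem integrableOn_exp_neg_sq_div_sq_Iic {X : ℝ} (hX : X < 0) :
    IntegrableOn (fun T : ℝ => exp (-T ^ 2) / (2 * T ^ 2)) (Iic X) := by
  refine Integrable.mono' (integrable_exp_neg_sq.div_const (2 * X ^ 2)).integrableOn ?_ ?_
  · refine ContinuousOn.aestronglyMeasurable ?_ measurableSet_Iic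
    refine ContinuousOn.div (by fun_prop) (by fun_prop) fun T hT => ?_
    have : T ≠ 0 := (hT.out.trans_lt hX).ne
    positivity
  · filter_upwards [ae_restrict_mem measurableSet_Iic] with T hT
    rw [norm_of_nonneg (by positivity)]
    exact exp_neg_sq_div_sq_le hT hX

theorem integral_exp_neg_sq_add_integral_exp_neg_sq_div_sq {X : ℝ} (hX : X < 0) :
    (∫ T in Iio X, exp (-T ^ 2)) + ∫ T in Iio X, exp (-T ^ 2) / (2 * T ^ 2) =
      -exp (-X ^ 2) / (2 * X) := by
  have hgauss : IntegrableOn (fun T : ℝ => exp (-T ^ 2)) (Iic X) :=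
    integrable_exp_neg_sq.integrableOn
  have hrem := integrableOn_exp_neg_sq_div_sq_Iic hX
  rw [← integral_Iic_eq_integral_Iio, ← integral_Iic_eq_integral_Iio,
    ← integral_add hgauss hrem, integral_Iic_of_hasDerivAt_of_tendsto'
      (fun x hx => hasDerivAt_neg_exp_neg_sq_div_two_mul (hx.out.trans_lt hX).ne)
      (hgauss.add hrem) tendsto_neg_exp_neg_sq_div_two_mul_atBot, sub_zero]

theorem Uminus_add_UminusRemainder {X : ℝ} (hX : X < 0) :
    Uminus X + UminusRemainder X = -(1 / (2 * X)) := by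
  rw [Uminus, UminusRemainder, ← mul_add, integral_exp_neg_sq_add_integral_exp_neg_sq_div_sq hX,
    mul_div_assoc', mul_neg, ← exp_add, add_neg_cancel, exp_zero, neg_div]

theorem UminusRemainder_nonneg (X : ℝ) : 0 ≤ UminusRemainder X :=
  mul_nonneg (exp_pos _).le (integral_nonneg fun T => by positivity)

theorem UminusRemainder_le {X : ℝ} (hX : X < 0) :
    UminusRemainder X ≤ Uminus X / (2 * X ^ 2) := by
  rw [UminusRemainder, Uminus, mul_div_assoc, ← integral_div,
    ← integral_Iic_eq_integral_Iio, ← integral_Iic_eq_integral_Iio]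
  refine mul_le_mul_of_nonneg_left ?_ (exp_pos _).le
  exact setIntegral_mono_on (integrableOn_exp_neg_sq_div_sq_Iic hX)
    (integrable_exp_neg_sq.div_const _).integrableOn measurableSet_Iic
    fun T hT => exp_neg_sq_div_sq_le hT hX

theorem Uminus_le_one_div_two_mul_abs {X : ℝ} (hX : X < 0) : Uminus X ≤ 1 / (2 * |X|) := by
  rw [abs_of_neg hX, mul_neg, div_neg]
  linarith [Uminus_add_UminusRemainder hX, UminusRemainder_nonneg X]

/-- First step of the asymptotic expansion of `U⁻` at `-∞`:
for `X < 0`, `|U⁻(X) + 1/(2X)| ≤ 1/(4|X|³)`. -/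
theorem Uminus_asymptotic (X : ℝ) (hX : X < 0) :
    |Uminus X + 1 / (2 * X)| ≤ 1 / (4 * |X| ^ 3) := by
  have hsum := Uminus_add_UminusRemainder hX
  have hR := UminusRemainder_nonneg X
  have habs : |X| ≠ 0 := abs_ne_zero.mpr hX.ne
  rw [show Uminus X + 1 / (2 * X) = -UminusRemainder X by linarith, abs_neg, abs_of_nonneg hR]
  calc UminusRemainder X ≤ Uminus X / (2 * X ^ 2) := UminusRemainder_le hX
    _ ≤ 1 / (2 * |X|) / (2 * |X| ^ 2) := by
      rw [sq_abs]
      gcongr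
      exact Uminus_le_one_div_two_mul_abs hX
    _ = 1 / (4 * |X| ^ 3) := by field_simp; ring
end

section
/- Fix a bounded continuous g : ℝ → ℝ and let y⁻(x, ε) = e^{x²/ε} ∫_{-∞}^x e^{-t²/ε} g(t) dt. Then for every real K there is a constant C (one may take C = e^{K²} ∫_{-∞}^K e^{-T²} dT) such that for all ε > 0 and all real x with x ≤ K·√ε one has |y⁻(x, ε)| ≤ C·sup|g|·√ε. -/
/-!
Bounding `|g|` by `M` leaves only the Gaussian weight. The substitution `t = √ε T` turns
`e^{x²/ε} ∫_{-∞}^x e^{-t²/ε} dt` into `√ε F(x/√ε)` with `F X = e^{X²} ∫_{-∞}^X e^{-T²} dT`,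
and `F` is nondecreasing: the shift `T = X + s` writes it as `∫_{-∞}^0 e^{-2Xs - s²} ds`,
whose integrand increases with `X` because `s < 0`.
-/

open MeasureTheory Set Real

theorem integral_comp_mul_left_Iio {E : Type*} [NormedAddCommGroup E] [NormedSpace ℝ E]
    (g : ℝ → E) (a : ℝ) {b : ℝ} (hb : 0 < b) :
    ∫ x in Iio a, g (b * x) = b⁻¹ • ∫ x in Iio (b * a), g x := by
  rw [← integral_indicator measurableSet_Iio, ← integral_indicator measurableSet_Iio,
    ← abs_of_pos (inv_pos.mpr hb), ← Measure.integral_comp_mul_left]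
  congr
  ext1 x
  rw [← indicator_comp_right, preimage_const_mul_Iio₀ _ hb, mul_div_cancel_left₀ _ hb.ne',
    Function.comp_def]

theorem integral_Iio_comp_add_right {E : Type*} [NormedAddCommGroup E] [NormedSpace ℝ E]
    (g : ℝ → E) (a b : ℝ) :
    ∫ x in Iio a, g (x + b) = ∫ x in Iio (a + b), g x := by
  rw [← (measurePreserving_add_right volume b).setIntegral_preimage_emb
    (measurableEmbedding_addRight b) g (Iio (a + b)), preimage_add_const_Iio, add_sub_cancel_right]

theorem abs_setIntegral_mul_le_mul_setIntegral {α : Type*} [MeasurableSpace α] {μ : Measure α}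
    {s : Set α} {w g : α → ℝ} {M : ℝ} (hw : IntegrableOn w s μ) (hw_nonneg : ∀ t, 0 ≤ w t)
    (hg : ∀ t, |g t| ≤ M) :
    |∫ t in s, w t * g t ∂μ| ≤ M * ∫ t in s, w t ∂μ := by
  rw [← norm_eq_abs, ← integral_const_mul]
  refine norm_integral_le_of_norm_le (hw.const_mul M) (ae_of_all _ fun t => ?_)
  rw [norm_mul, norm_of_nonneg (hw_nonneg t), norm_eq_abs, mul_comm M]
  exact mul_le_mul_of_nonneg_left (hg t) (hw_nonneg t)

theorem integral_Iio_exp_neg_sq_div {ε : ℝ} (hε : 0 < ε) (x : ℝ) :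
    ∫ t in Iio x, exp (-t ^ 2 / ε) = √ε * ∫ T in Iio (x / √ε), exp (-T ^ 2) := by
  have hs : 0 < √ε := sqrt_pos.2 hε
  have h := integral_comp_mul_left_Iio (fun T => exp (-T ^ 2)) x (inv_pos.2 hs)
  simp only [inv_inv, smul_eq_mul, inv_mul_eq_div] at h
  rw [← h]
  refine setIntegral_congr_fun measurableSet_Iio fun t _ => ?_
  rw [div_pow, sq_sqrt hε.le, neg_div]

theorem exp_sq_mul_integral_Iio_exp_neg_sq (X : ℝ) :
    exp (X ^ 2) * ∫ T in Iio X, exp (-T ^ 2) = ∫ s in Iio 0, exp (-(2 * X * s + s ^ 2)) := by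
  rw [← integral_const_mul, ← zero_add X, ← integral_Iio_comp_add_right, zero_add]
  refine setIntegral_congr_fun measurableSet_Iio fun s _ => ?_
  rw [← exp_add]
  ring_nf

theorem integrable_exp_neg_two_mul_add_sq (X : ℝ) :
    Integrable fun s : ℝ => exp (-(2 * X * s + s ^ 2)) := by
  refine (((integrable_exp_neg_mul_sq one_pos).comp_add_right X).const_mul (exp (X ^ 2))).congr
    (ae_of_all _ fun s => ?_)
  simp only [← exp_add]
  ring_nf

theorem monotone_exp_sq_mul_integral_Iio_exp_neg_sq :
    Monotone fun X : ℝ => exp (X ^ 2) * ∫ T in Iio X, exp (-T ^ 2) := by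
  intro X K hXK
  simp only [exp_sq_mul_integral_Iio_exp_neg_sq]
  refine setIntegral_mono_on (integrable_exp_neg_two_mul_add_sq X).integrableOn
    (integrable_exp_neg_two_mul_add_sq K).integrableOn measurableSet_Iio fun s hs => ?_
  have hs : s < 0 := hs
  exact exp_le_exp.2 (by nlinarith)

theorem yminus_interior_estimate_general (g : ℝ → ℝ)
    (M : ℝ) (hM : ∀ x, |g x| ≤ M) (K : ℝ) :
    ∀ ε : ℝ, 0 < ε → ∀ x : ℝ, x ≤ K * Real.sqrt ε →
      |Real.exp (x ^ 2 / ε) * ∫ t in Set.Iio x, Real.exp (-t ^ 2 / ε) * g t| ≤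
        (Real.exp (K ^ 2) * ∫ T in Set.Iio K, Real.exp (-T ^ 2)) * M * Real.sqrt ε := by
  intro ε hε x hx
  have hM_nonneg : 0 ≤ M := (abs_nonneg _).trans (hM 0)
  have hX : x / √ε ≤ K := (div_le_iff₀ (sqrt_pos.2 hε)).2 hx
  have hexp : x ^ 2 / ε = (x / √ε) ^ 2 := by rw [div_pow, sq_sqrt hε.le]
  have hgauss : IntegrableOn (fun t => exp (-t ^ 2 / ε)) (Iio x) := by
    simpa only [neg_div, div_eq_inv_mul, mul_neg, neg_mul] using
      (integrable_exp_neg_mul_sq (inv_pos.2 hε)).integrableOn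
  calc |exp (x ^ 2 / ε) * ∫ t in Iio x, exp (-t ^ 2 / ε) * g t|
      = exp (x ^ 2 / ε) * |∫ t in Iio x, exp (-t ^ 2 / ε) * g t| := by
        rw [abs_mul, abs_exp]
    _ ≤ exp (x ^ 2 / ε) * (M * ∫ t in Iio x, exp (-t ^ 2 / ε)) := by
        gcongr
        exact abs_setIntegral_mul_le_mul_setIntegral hgauss (fun t => (exp_pos _).le) hM
    _ = (exp ((x / √ε) ^ 2) * ∫ T in Iio (x / √ε), exp (-T ^ 2)) * M * √ε := by
        rw [integral_Iio_exp_neg_sq_div hε, hexp]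
        ring
    _ ≤ (exp (K ^ 2) * ∫ T in Iio K, exp (-T ^ 2)) * M * √ε := by
        have := monotone_exp_sq_mul_integral_Iio_exp_neg_sq hX
        gcongr

/-- Interior estimate for `y⁻(x,ε) = e^{x²/ε} ∫_{-∞}^x e^{-t²/ε} g(t) dt`:
for every `K`, with `C = e^{K²} ∫_{-∞}^K e^{-T²} dT`, for all `ε > 0` and
`x ≤ K√ε` one has `|y⁻(x,ε)| ≤ C·sup|g|·√ε`. -/
theorem yminus_interior_estimate (g : ℝ → ℝ) (hg : Continuous g)
    (M : ℝ) (hM : ∀ x, |g x| ≤ M) (K : ℝ) :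
    ∀ ε : ℝ, 0 < ε → ∀ x : ℝ, x ≤ K * Real.sqrt ε →
      |Real.exp (x ^ 2 / ε) * ∫ t in Set.Iio x, Real.exp (-t ^ 2 / ε) * g t| ≤
        (Real.exp (K ^ 2) * ∫ T in Set.Iio K, Real.exp (-T ^ 2)) * M * Real.sqrt ε :=
  yminus_interior_estimate_general g M hM K
end

section
/- Let g : ℝ → ℝ be continuous and bounded. Then ∫_{-∞}^{∞} e^{-t²/ε} g(t) dt = 0 for every ε ∈ (0, 1] if and only if g is odd, i.e. g(t) + g(−t) = 0 for all t ∈ ℝ. -/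
/-!
Put `h t = g t + g (-t)`, `u t = e^{-t²} ∈ [0, 1]` and `k = u h`. Taking `ε = 1/(n+1)` and
symmetrizing, the hypothesis says `∫ uⁿ k = 0` for all `n`; by Weierstrass approximation then
`∫ φ(u) k = 0` for every continuous `φ`. As `h` is even, `φ(y) = y h(√(-log y))` (continuous
because `h` is bounded) satisfies `φ(u) = k`, so `∫ k² = 0` and `h = 0`. Conversely, for odd `g`
the integrand is odd.
-/

open MeasureTheory Real Set Filter Topology

theorem integral_eq_zero_of_odd {f : ℝ → ℝ} (hf : ∀ x, f (-x) = -f x) : ∫ x, f x = 0 := by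
  have h := integral_neg_eq_self f volume
  simp only [hf, integral_neg] at h
  linarith

theorem continuous_id_mul_of_bounded {F : ℝ → ℝ} {C : ℝ} (hF : ∀ y, |F y| ≤ C)
    (hc : ∀ y ≠ 0, ContinuousAt F y) : Continuous fun y => y * F y := by
  refine continuous_iff_continuousAt.2 fun y => ?_
  rcases eq_or_ne y 0 with rfl | hy
  · have hbdd : IsBoundedUnder (· ≤ ·) (𝓝 (0 : ℝ)) (norm ∘ F) :=
      isBoundedUnder_of ⟨C, fun y => hF y⟩
    simpa [ContinuousAt] using tendsto_id.zero_mul_isBoundedUnder_le hbdd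
  · exact continuousAt_id.mul (hc y hy)

section Moments

variable {α : Type*} [MeasurableSpace α] {μ : Measure α} {u k : α → ℝ}

theorem integrable_comp_mul (hu : AEStronglyMeasurable u μ) (hu01 : ∀ x, u x ∈ Icc (0 : ℝ) 1)
    (hk : Integrable k μ) {φ : ℝ → ℝ} (hφ : Continuous φ) :
    Integrable (fun x => φ (u x) * k x) μ := by
  obtain ⟨C, hC⟩ := isCompact_Icc.exists_bound_of_continuousOn hφ.continuousOn
  exact hk.bdd_mul (hφ.comp_aestronglyMeasurable hu) (ae_of_all _ fun x => hC _ (hu01 x))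

theorem integral_eval_comp_mul_eq_zero (hu : AEStronglyMeasurable u μ)
    (hu01 : ∀ x, u x ∈ Icc (0 : ℝ) 1) (hk : Integrable k μ)
    (hmom : ∀ n : ℕ, ∫ x, u x ^ n * k x ∂μ = 0) (p : Polynomial ℝ) :
    ∫ x, p.eval (u x) * k x ∂μ = 0 := by
  induction p using Polynomial.induction_on' with
  | add p q hp hq =>
    simp only [Polynomial.eval_add, add_mul]
    rw [integral_add (integrable_comp_mul hu hu01 hk p.continuous)
      (integrable_comp_mul hu hu01 hk q.continuous), hp, hq, add_zero]
  | monomial n a =>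
    simp only [Polynomial.eval_monomial, mul_assoc, integral_const_mul, hmom, mul_zero]

theorem integral_comp_mul_eq_zero_of_moments (hu : AEStronglyMeasurable u μ)
    (hu01 : ∀ x, u x ∈ Icc (0 : ℝ) 1) (hk : Integrable k μ)
    (hmom : ∀ n : ℕ, ∫ x, u x ^ n * k x ∂μ = 0) {φ : ℝ → ℝ} (hφ : Continuous φ) :
    ∫ x, φ (u x) * k x ∂μ = 0 := by
  set K := ∫ x, ‖k x‖ ∂μ
  have hK : 0 ≤ K := integral_nonneg fun _ => norm_nonneg _
  suffices h : ∀ δ > 0, |∫ x, φ (u x) * k x ∂μ| ≤ δ * K by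
    refine eq_of_forall_dist_le fun ε hε => ?_
    calc dist (∫ x, φ (u x) * k x ∂μ) 0 ≤ ε / (K + 1) * K := by
          rw [Real.dist_0_eq_abs]; exact h _ (by positivity)
      _ ≤ ε := by rw [div_mul_eq_mul_div, div_le_iff₀ (by positivity)]; nlinarith
  intro δ hδ
  obtain ⟨p, hp⟩ := exists_polynomial_near_of_continuousOn 0 1 φ hφ.continuousOn δ hδ
  calc |∫ x, φ (u x) * k x ∂μ|
      = ‖∫ x, (φ (u x) - p.eval (u x)) * k x ∂μ‖ := by
        simp only [sub_mul]
        rw [integral_sub (integrable_comp_mul hu hu01 hk hφ)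
          (integrable_comp_mul hu hu01 hk p.continuous),
          integral_eval_comp_mul_eq_zero hu hu01 hk hmom, sub_zero, Real.norm_eq_abs]
    _ ≤ ∫ x, δ * ‖k x‖ ∂μ := by
        refine norm_integral_le_of_norm_le (hk.norm.const_mul δ) (ae_of_all _ fun x => ?_)
        rw [norm_mul, Real.norm_eq_abs, abs_sub_comm]
        exact mul_le_mul_of_nonneg_right (hp _ (hu01 x)).le (norm_nonneg _)
    _ = δ * K := integral_const_mul _ _

end Moments

theorem integrable_exp_neg_sq_div_mul {ε : ℝ} (hε : 0 < ε) {h : ℝ → ℝ}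
    (hm : AEStronglyMeasurable h) {C : ℝ} (hC : ∀ x, |h x| ≤ C) :
    Integrable fun t : ℝ => exp (-t ^ 2 / ε) * h t := by
  have hexp : (fun t : ℝ => exp (-t ^ 2 / ε)) = fun t => exp (-ε⁻¹ * t ^ 2) := by
    ext t; ring_nf
  exact (hexp ▸ integrable_exp_neg_mul_sq (inv_pos.2 hε)).mul_bdd hm (ae_of_all _ hC)

theorem integral_mul_comp_neg_of_even {w : ℝ → ℝ} (hw : ∀ t, w (-t) = w t) (g : ℝ → ℝ) :
    ∫ t, w t * g (-t) = ∫ t, w t * g t := by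
  simpa only [hw] using integral_neg_eq_self (fun t => w t * g t) volume

theorem eq_zero_of_integral_exp_mul_eq_zero_of_even {h : ℝ → ℝ} (hc : Continuous h) {C : ℝ}
    (hC : ∀ x, |h x| ≤ C) (heven : ∀ t, h (-t) = h t)
    (h0 : ∀ ε ∈ Ioc (0 : ℝ) 1, ∫ t, exp (-t ^ 2 / ε) * h t = 0) (t : ℝ) : h t = 0 := by
  set u : ℝ → ℝ := fun t => exp (-t ^ 2)
  set k : ℝ → ℝ := fun t => u t * h t
  have hu : Continuous u := by fun_prop
  have hk_cont : Continuous k := hu.mul hc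
  have hu01 : ∀ t, u t ∈ Icc (0 : ℝ) 1 := fun t =>
    ⟨(exp_pos _).le, exp_le_one_iff.2 (neg_nonpos.2 (sq_nonneg t))⟩
  have hk : Integrable k := by
    simpa [k, u] using integrable_exp_neg_sq_div_mul one_pos hc.aestronglyMeasurable hC
  have hmom : ∀ n : ℕ, ∫ t, u t ^ n * k t = 0 := by
    intro n
    have hn : (0 : ℝ) < n + 1 := by positivity
    convert h0 (n + 1)⁻¹ ⟨inv_pos.2 hn, inv_le_one_of_one_le₀ (by simp)⟩ using 3 with t
    rw [← mul_assoc, ← pow_succ, ← exp_nat_mul, div_inv_eq_mul]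
    push_cast
    ring_nf
  have hφ : Continuous fun y => y * h √(-log y) :=
    continuous_id_mul_of_bounded (fun y => hC _) fun y hy =>
      hc.continuousAt.comp (continuous_sqrt.continuousAt.comp (continuousAt_log hy).neg)
  have hφu : ∀ t, u t * h √(-log (u t)) = k t := fun t => by
    simp only [u, k, log_exp, neg_neg, sqrt_sq_eq_abs]
    rcases abs_choice t with ht | ht <;> simp only [ht, heven]
  have hkk : ∫ t, k t * k t = 0 := by
    simpa only [hφu] using
      integral_comp_mul_eq_zero_of_moments hu.aestronglyMeasurable hu01 hk hmom hφ
  have hkk_int : Integrable fun t => k t * k t := by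
    simpa only [hφu] using integrable_comp_mul hu.aestronglyMeasurable hu01 hk hφ
  have hk0 : (fun t => k t * k t) = 0 :=
    ((hk_cont.mul hk_cont).ae_eq_iff_eq volume continuous_const).1
      ((integral_eq_zero_iff_of_nonneg (fun t => mul_self_nonneg (k t)) hkk_int).1 hkk)
  simpa [k, u, exp_ne_zero] using congrFun hk0 t

/-- For `g` continuous and bounded, `∫_{-∞}^{∞} e^{-t²/ε} g(t) dt = 0` for all
`ε ∈ (0,1]` if and only if `g` is odd. -/
theorem integral_exp_mul_eq_zero_iff_odd (g : ℝ → ℝ) (hg : Continuous g)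
    (M : ℝ) (hM : ∀ x, |g x| ≤ M) :
    (∀ ε ∈ Set.Ioc (0 : ℝ) 1, ∫ t : ℝ, Real.exp (-t ^ 2 / ε) * g t = 0) ↔
      ∀ t : ℝ, g t + g (-t) = 0 := by
  have hweight : ∀ ε t : ℝ, exp (-(-t) ^ 2 / ε) = exp (-t ^ 2 / ε) := by simp
  constructor
  · intro h0
    refine eq_zero_of_integral_exp_mul_eq_zero_of_even (hg.add (hg.comp continuous_neg))
      (fun x => (abs_add_le _ _).trans (add_le_add (hM x) (hM (-x))))
      (fun t => by simp [add_comm]) fun ε hε => ?_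
    simp only [mul_add]
    rw [integral_add (integrable_exp_neg_sq_div_mul hε.1 hg.aestronglyMeasurable hM)
      (integrable_exp_neg_sq_div_mul (h := fun t => g (-t)) hε.1
        (hg.comp continuous_neg).aestronglyMeasurable fun x => hM (-x)),
      integral_mul_comp_neg_of_even (hweight ε), h0 ε hε, add_zero]
  · intro hodd ε _
    exact integral_eq_zero_of_odd fun t => by
      rw [hweight, eq_neg_of_add_eq_zero_right (hodd t), mul_neg]
end

section
/- Let r > 0, let a : [0, r] → ℂ be continuous, and let g : (0, ∞) → ℂ satisfy g(X) → 0 as X → ∞. If sup_{0 < x ≤ r} |a(x) + g(x/ε)| → 0 as ε → 0⁺, then a(x) = 0 for all x ∈ [0, r] and g(X) = 0 for all X > 0. -/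
/-!
Along a fixed `x > 0` the rapid variable `x / ε` tends to infinity, so `g (x / ε) → 0` and
hence `a x = 0`. Along the ray `x = ε X` the rapid variable is frozen at `X` while `x → 0`, so
uniform convergence and continuity of `a` at `0` give `a 0 + g X = 0`; letting `X → ∞` forces
`a 0 = 0`, and then `g X = 0`.
-/

open Filter Topology Set

section CompositeDecomposition

variable {E : Type*} [NormedAddCommGroup E] {a g : ℝ → E} {r : ℝ}

lemma tendstoUniformlyOn_of_forall_exists_norm_le
    (h : ∀ δ : ℝ, 0 < δ → ∃ ε₁ : ℝ, 0 < ε₁ ∧ ∀ ε : ℝ, 0 < ε → ε < ε₁ →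
      ∀ x ∈ Ioc (0 : ℝ) r, ‖a x + g (x / ε)‖ ≤ δ) :
    TendstoUniformlyOn (fun ε x => a x + g (x / ε)) 0 (𝓝[>] 0) (Ioc 0 r) := by
  rw [Metric.tendstoUniformlyOn_iff]
  intro δ hδ
  obtain ⟨ε₁, hε₁, hbound⟩ := h (δ / 2) (half_pos hδ)
  filter_upwards [Ioo_mem_nhdsGT hε₁] with ε hε x hx
  simpa [dist_zero_left] using (hbound ε hε.1 hε.2 x hx).trans_lt (half_lt_self hδ)

lemma tendsto_div_nhdsGT_zero_atTop {x : ℝ} (hx : 0 < x) :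
    Tendsto (fun ε => x / ε) (𝓝[>] 0) atTop := by
  simpa only [div_eq_mul_inv] using tendsto_inv_nhdsGT_zero.const_mul_atTop hx

lemma tendsto_mul_nhdsGT_zero_nhdsWithin_Ioc (hr : 0 < r) {X : ℝ} (hX : 0 < X) :
    Tendsto (fun ε => ε * X) (𝓝[>] 0) (𝓝[Ioc 0 r] 0) := by
  have hlim : Tendsto (fun ε => ε * X) (𝓝[>] 0) (𝓝 0) := by
    have hcont : Continuous fun ε : ℝ => ε * X := by fun_prop
    exact (hcont.tendsto' 0 0 (zero_mul X)).mono_left nhdsWithin_le_nhds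
  refine tendsto_nhdsWithin_iff.2 ⟨hlim, ?_⟩
  filter_upwards [self_mem_nhdsWithin, hlim.eventually (eventually_lt_nhds hr)] with ε hε hεr
  exact ⟨mul_pos hε hX, hεr.le⟩

lemma eq_zero_of_tendsto_add_comp_div (hg : Tendsto g atTop (𝓝 0)) {x : ℝ} (hx : 0 < x)
    (h : Tendsto (fun ε => a x + g (x / ε)) (𝓝[>] 0) (𝓝 0)) : a x = 0 := by
  have hconst := h.sub (hg.comp (tendsto_div_nhdsGT_zero_atTop hx))
  simp only [Function.comp_def, add_sub_cancel_right, sub_zero] at hconst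
  exact tendsto_const_nhds_iff.1 hconst

lemma add_eq_zero_of_tendstoUniformlyOn (hr : 0 < r) (ha : ContinuousWithinAt a (Ioc 0 r) 0)
    (h : TendstoUniformlyOn (fun ε x => a x + g (x / ε)) 0 (𝓝[>] 0) (Ioc 0 r))
    {X : ℝ} (hX : 0 < X) : a 0 + g X = 0 := by
  have hray := tendsto_mul_nhdsGT_zero_nhdsWithin_Ioc hr hX
  have hzero : Tendsto (fun ε => a (ε * X) + g (ε * X / ε)) (𝓝[>] 0) (𝓝 0) :=
    h.tendsto_comp continuousWithinAt_const hray
  have hsum : Tendsto (fun ε => a (ε * X) + g X) (𝓝[>] 0) (𝓝 (a 0 + g X)) :=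
    (ha.tendsto.comp hray).add_const _
  refine tendsto_nhds_unique (hsum.congr' ?_) hzero
  filter_upwards [self_mem_nhdsWithin] with ε hε
  rw [mul_div_cancel_left₀ X (ne_of_gt hε)]

lemma eq_zero_of_forall_add_eq_zero {c : E} (hg : Tendsto g atTop (𝓝 0))
    (h : ∀ X : ℝ, 0 < X → c + g X = 0) : c = 0 := by
  have hlim : Tendsto (fun X => c + g X) atTop (𝓝 (c + 0)) := hg.const_add c
  rw [add_zero] at hlim
  refine tendsto_nhds_unique hlim (tendsto_const_nhds.congr' ?_)
  filter_upwards [eventually_gt_atTop 0] with X hX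
  exact (h X hX).symm

end CompositeDecomposition

/-- Uniqueness of composite expansions: if `a` is continuous on `[0,r]`,
`g(X) → 0` as `X → ∞`, and `sup_{0<x≤r} ‖a(x) + g(x/ε)‖ → 0` as `ε → 0⁺`,
then `a ≡ 0` on `[0,r]` and `g ≡ 0` on `(0,∞)`. -/
theorem composite_decomposition_unique (r : ℝ) (hr : 0 < r)
    (a : ℝ → ℂ) (ha : ContinuousOn a (Set.Icc 0 r))
    (g : ℝ → ℂ) (hg : Filter.Tendsto g Filter.atTop (nhds 0))
    (h : ∀ δ : ℝ, 0 < δ → ∃ ε₁ : ℝ, 0 < ε₁ ∧ ∀ ε : ℝ, 0 < ε → ε < ε₁ →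
      ∀ x ∈ Set.Ioc (0 : ℝ) r, ‖a x + g (x / ε)‖ ≤ δ) :
    (∀ x ∈ Set.Icc (0 : ℝ) r, a x = 0) ∧ ∀ X : ℝ, 0 < X → g X = 0 := by
  have hunif := tendstoUniformlyOn_of_forall_exists_norm_le h
  have hsum : ∀ X : ℝ, 0 < X → a 0 + g X = 0 := fun X hX =>
    add_eq_zero_of_tendstoUniformlyOn hr ((ha 0 ⟨le_rfl, hr.le⟩).mono Ioc_subset_Icc_self) hunif hX
  have ha0 : a 0 = 0 := eq_zero_of_forall_add_eq_zero hg hsum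
  refine ⟨fun x hx => ?_, fun X hX => by simpa [ha0] using hsum X hX⟩
  rcases hx.1.eq_or_lt with rfl | hxpos
  · exact ha0
  · exact eq_zero_of_tendsto_add_comp_div hg hxpos (hunif.tendsto_at ⟨hxpos, hx.2⟩)
end

section
/- Let p ≥ 2 be an integer, α > 0 a real number, and D a nonnegative integer with D ≡ 0 or D ≡ 1 (mod p). Then the differential equation Z''(X) − α·X^{p−1}·Z'(X) + α·D·X^{p−2}·Z(X) = 0 admits a monic polynomial solution of degree exactly D. -/
open Polynomial Finset

/-! With `β = α D`, the operator `L = d²/dX² - α X^(p-1) d/dX + β X^(p-2)` sends `X^n` to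
`n(n-1) X^(n-2) + α(D - n) X^(n+p-2)`. Applied to `Z = ∑_{k ≤ D/p} c_k X^(D-kp)` the image
telescopes: the second part vanishes for the top term (`n = D`), the first part vanishes for the
bottom term (`n = D % p ∈ {0, 1}`), and the remaining adjacent parts cancel exactly when the
`c_k` follow the recursion below, started at `c_0 = 1`. -/

theorem Finset.sum_range_succ_add_eq_zero {M : Type*} [AddCommMonoid M] {f g : ℕ → M} {K : ℕ}
    (hf : f K = 0) (hg : g 0 = 0) (hfg : ∀ k < K, f k + g (k + 1) = 0) :
    ∑ k ∈ range (K + 1), (f k + g k) = 0 := by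
  rw [sum_add_distrib, sum_range_succ f, sum_range_succ' g, hf, hg, add_zero, add_zero,
    ← sum_add_distrib]
  exact sum_eq_zero fun k hk => hfg k (mem_range.mp hk)

section Operator

variable {R : Type*} [CommRing R]

noncomputable def reducedInnerOp (p : ℕ) (α β : R) : R[X] →ₗ[R] R[X] :=
  derivative ∘ₗ derivative - LinearMap.mulLeft R (C α * X ^ (p - 1)) ∘ₗ derivative
    + LinearMap.mulLeft R (C β * X ^ (p - 2))

theorem reducedInnerOp_apply (p : ℕ) (α β : R) (Z : R[X]) :
    reducedInnerOp p α β Z = derivative (derivative Z) - C α * X ^ (p - 1) * derivative Z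
      + C β * X ^ (p - 2) * Z := rfl

theorem reducedInnerOp_X_pow {p : ℕ} (hp : 2 ≤ p) (α β : R) (n : ℕ) :
    reducedInnerOp p α β (X ^ n) =
      C ((n : R) * (n - 1)) * X ^ (n - 2) + C (β - α * n) * X ^ (n + p - 2) := by
  rcases n with _ | n
  · simp [reducedInnerOp_apply]
  have hX₁ : X ^ (p - 1) * X ^ n = (X ^ (n + 1 + p - 2) : R[X]) := by
    rw [← pow_add]; congr 1; omega
  have hX₂ : X ^ (p - 2) * X ^ (n + 1) = (X ^ (n + 1 + p - 2) : R[X]) := by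
    rw [← pow_add]; congr 1; omega
  have hn : n + 1 - 2 = n - 1 := by omega
  rw [reducedInnerOp_apply, derivative_X_pow, derivative_C_mul, derivative_X_pow,
    add_tsub_cancel_right, hn]
  simp only [map_mul, map_sub, map_natCast, Nat.cast_add, Nat.cast_one, add_sub_cancel_right]
  linear_combination C β * hX₂ - C α * C ((n : R) + 1) * hX₁

end Operator

section Solution

variable {𝕜 : Type*} [Field 𝕜] (p : ℕ) (α : 𝕜) (D : ℕ)

noncomputable def reducedInnerCoeff : ℕ → 𝕜
  | 0 => 1
  | k + 1 =>
    -(((D : 𝕜) - k * p) * ((D : 𝕜) - k * p - 1)) * reducedInnerCoeff k / (α * ((k + 1) * p))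

noncomputable def reducedInnerPoly : 𝕜[X] :=
  ∑ k ∈ range (D / p + 1), reducedInnerCoeff p α D k • X ^ (D - k * p)

variable {p α D}

theorem reducedInnerCoeff_succ [CharZero 𝕜] (hp : p ≠ 0) (hα : α ≠ 0) (k : ℕ) :
    α * ((k + 1) * p) * reducedInnerCoeff p α D (k + 1) =
      -(((D : 𝕜) - k * p) * ((D : 𝕜) - k * p - 1)) * reducedInnerCoeff p α D k := by
  rw [reducedInnerCoeff, mul_div_cancel₀]
  exact mul_ne_zero hα (mul_ne_zero (Nat.cast_add_one_ne_zero k) (Nat.cast_ne_zero.mpr hp))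

theorem natDegree_reducedInnerPoly_le : (reducedInnerPoly p α D).natDegree ≤ D :=
  natDegree_sum_le_of_forall_le _ _ fun _ _ =>
    (natDegree_smul_le _ _).trans ((natDegree_X_pow_le _).trans (Nat.sub_le _ _))

theorem coeff_reducedInnerPoly_self (hp : 0 < p) : (reducedInnerPoly p α D).coeff D = 1 := by
  rw [reducedInnerPoly, finsetSum_coeff, sum_eq_single_of_mem 0 (by simp)]
  · simp [reducedInnerCoeff]
  intro k hk hk0
  have hkp : k * p ≤ D := (Nat.le_div_iff_mul_le hp).mp (Nat.lt_succ_iff.mp (mem_range.mp hk))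
  have hpos : 0 < k * p := Nat.mul_pos (Nat.pos_of_ne_zero hk0) hp
  rw [coeff_smul, coeff_X_pow, if_neg (by omega), smul_zero]

theorem monic_reducedInnerPoly (hp : 0 < p) : (reducedInnerPoly p α D).Monic :=
  monic_of_natDegree_le_of_coeff_eq_one D natDegree_reducedInnerPoly_le
    (coeff_reducedInnerPoly_self hp)

theorem natDegree_reducedInnerPoly (hp : 0 < p) : (reducedInnerPoly p α D).natDegree = D :=
  natDegree_eq_of_le_of_coeff_ne_zero natDegree_reducedInnerPoly_le
    (by rw [coeff_reducedInnerPoly_self hp]; exact one_ne_zero)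

theorem reducedInnerOp_reducedInnerPoly [CharZero 𝕜] (hp : 2 ≤ p) (hα : α ≠ 0)
    (hD : D % p = 0 ∨ D % p = 1) :
    reducedInnerOp p α (α * D) (reducedInnerPoly p α D) = 0 := by
  have hp₀ : 0 < p := by omega
  have hkp : ∀ k ≤ D / p, k * p ≤ D := fun k hk => (Nat.le_div_iff_mul_le hp₀).mp hk
  have hcast : ∀ k ≤ D / p, ((D - k * p : ℕ) : 𝕜) = D - k * p := fun k hk => by
    push_cast [Nat.cast_sub (hkp k hk)]; ring
  simp only [reducedInnerPoly, map_sum, map_smul, reducedInnerOp_X_pow hp, smul_add]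
  apply Finset.sum_range_succ_add_eq_zero
  · have hlast : D - D / p * p = D % p := by rw [Nat.mod_eq_sub_div_mul]
    rw [hlast]
    rcases hD with h | h <;> simp [h]
  · simp
  intro k hk
  have hexp : D - (k + 1) * p + p - 2 = D - k * p - 2 := by
    have h₁ := hkp (k + 1) hk
    have h₂ : (k + 1) * p = k * p + p := Nat.succ_mul k p
    omega
  have hcoeff : reducedInnerCoeff p α D k * ((D - k * p : ℕ) : 𝕜) * ((D - k * p : ℕ) - 1) +
      reducedInnerCoeff p α D (k + 1) * (α * D - α * (D - (k + 1) * p : ℕ)) = 0 := by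
    rw [hcast k hk.le, hcast (k + 1) hk]
    push_cast
    linear_combination reducedInnerCoeff_succ hp₀.ne' hα k
  simp only [smul_eq_C_mul, ← mul_assoc, ← C_mul]
  rw [hexp, ← add_mul, ← C_add, hcoeff, C_0, zero_mul]

end Solution

/-- For `p ≥ 2`, `α > 0` and `D` a nonnegative integer congruent to `0` or `1`
mod `p`, the equation `Z'' - α X^{p-1} Z' + α D X^{p-2} Z = 0` has a monic
polynomial solution of degree exactly `D`. -/
theorem reduced_inner_equation_polynomial_solution (p : ℕ) (hp : 2 ≤ p)
    (α : ℝ) (hα : 0 < α) (D : ℕ) (hD : D % p = 0 ∨ D % p = 1) :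
    ∃ Z : Polynomial ℝ, Z.Monic ∧ Z.natDegree = D ∧
      ∀ X : ℝ, (Polynomial.derivative (Polynomial.derivative Z)).eval X
        - α * X ^ (p - 1) * (Polynomial.derivative Z).eval X
        + α * D * X ^ (p - 2) * Z.eval X = 0 := by
  refine ⟨reducedInnerPoly p α D, monic_reducedInnerPoly (by omega),
    natDegree_reducedInnerPoly (by omega), fun x => ?_⟩
  have h := congrArg (eval x) (reducedInnerOp_reducedInnerPoly hp hα.ne' hD)
  simpa [reducedInnerOp_apply] using h
end

section
/- Let p ≥ 2 be an integer and l an integer with 0 ≤ l ≤ p−2. Define Y(X) = e^{X^p} ∫_X^∞ t^l·e^{-t^p} dt for X > 0. Then Y satisfies the differential equation Y'(X) = p·X^{p−1}·Y(X) − X^l, and for every X > 0 one has |Y(X) − X^{l+1−p}/p| ≤ ((p−l−1)/p²)·X^{l+1−2p}. -/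
/-!
Integrating by parts against `t ^ (p - 1) * exp (-t ^ p) = d/dt (-exp (-t ^ p) / p)` gives
`∫_X^∞ t^l e^{-t^p} = X^{l+1-p} e^{-X^p} / p - ((p-l-1)/p) ∫_X^∞ t^{l-p} e^{-t^p}`.
The remaining integral is nonnegative, and bounding `t^{l-p} ≤ X^{l+1-2p} t^{p-1}` on `(X, ∞)`
shows that it is at most `X^{l+1-2p} e^{-X^p} / p`.
-/

open MeasureTheory Set Filter Real

theorem hasDerivAt_integral_Ioi {E : Type*} [NormedAddCommGroup E] [NormedSpace ℝ E]
    [CompleteSpace E] {f : ℝ → E} {a x : ℝ} (hf : IntegrableOn f (Ioi a)) (hax : a < x)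
    (hfx : ContinuousAt f x) :
    HasDerivAt (fun y => ∫ t in Ioi y, f t) (-f x) x := by
  have hprim : HasDerivAt (fun y => ∫ t in a..y, f t) (f x) x :=
    intervalIntegral.integral_hasDerivAt_right
      ((intervalIntegrable_iff_integrableOn_Ioc_of_le hax.le).2 (hf.mono_set Ioc_subset_Ioi_self))
      (AEStronglyMeasurable.stronglyMeasurableAtFilter_of_mem hf.aestronglyMeasurable
        (Ioi_mem_nhds hax)) hfx
  refine (hprim.const_sub (∫ t in Ioi a, f t)).congr_of_eventuallyEq ?_
  filter_upwards [Ioi_mem_nhds hax] with y hy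
  rw [← intervalIntegral.integral_Ioi_sub_Ioi hf hy.le, sub_sub_cancel]

theorem zpow_le_zpow_mul_zpow_of_le {X t : ℝ} (hX : 0 < X) (hXt : X ≤ t) {z w : ℤ}
    (hzw : z ≤ w) : t ^ z ≤ X ^ (z - w) * t ^ w := by
  have ht : 0 < t := hX.trans_le hXt
  obtain ⟨n, hn⟩ : ∃ n : ℕ, z - w = -n := ⟨(w - z).toNat, by omega⟩
  have hanti : t ^ (z - w) ≤ X ^ (z - w) := by
    rw [hn, zpow_neg, zpow_neg, zpow_natCast, zpow_natCast]
    exact inv_anti₀ (pow_pos hX n) (pow_le_pow_left₀ hX.le hXt n)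
  calc t ^ z = t ^ (z - w) * t ^ w := by rw [← zpow_add₀ ht.ne', sub_add_cancel]
    _ ≤ X ^ (z - w) * t ^ w := by gcongr

section ExpNegPow

variable {p : ℕ}

theorem hasDerivAt_neg_exp_neg_pow_div (hp : p ≠ 0) (t : ℝ) :
    HasDerivAt (fun t : ℝ => -exp (-t ^ p) / p) (t ^ (p - 1) * exp (-t ^ p)) t := by
  refine ((hasDerivAt_pow p t).fun_neg.exp.neg.div_const (p : ℝ)).congr_deriv ?_
  field_simp [Nat.cast_ne_zero.mpr hp]

theorem tendsto_neg_exp_neg_pow_div_atTop (hp : p ≠ 0) :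
    Tendsto (fun t : ℝ => -exp (-t ^ p) / p) atTop (nhds 0) := by
  simpa using (tendsto_exp_neg_atTop_nhds_zero.comp (tendsto_pow_atTop hp)).neg.div_const (p : ℝ)

theorem integrableOn_Ioi_pow_pred_mul_exp_neg_pow (hp : p ≠ 0) {X : ℝ} (hX : 0 ≤ X) :
    IntegrableOn (fun t : ℝ => t ^ (p - 1) * exp (-t ^ p)) (Ioi X) :=
  integrableOn_Ioi_deriv_of_nonneg' (fun t _ => hasDerivAt_neg_exp_neg_pow_div hp t)
    (fun t ht => by have : 0 < t := hX.trans_lt ht; positivity)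
    (tendsto_neg_exp_neg_pow_div_atTop hp)

theorem integral_Ioi_pow_pred_mul_exp_neg_pow (hp : p ≠ 0) {X : ℝ} (hX : 0 ≤ X) :
    ∫ t in Ioi X, t ^ (p - 1) * exp (-t ^ p) = exp (-X ^ p) / p := by
  rw [integral_Ioi_of_hasDerivAt_of_nonneg' (fun t _ => hasDerivAt_neg_exp_neg_pow_div hp t)
    (fun t ht => by have : 0 < t := hX.trans_lt ht; positivity)
    (tendsto_neg_exp_neg_pow_div_atTop hp)]
  ring

theorem zpow_mul_exp_neg_pow_le (hp : p ≠ 0) {X t : ℝ} (hX : 0 < X) (hXt : X ≤ t) {z : ℤ}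
    (hz : z ≤ p - 1) :
    t ^ z * exp (-t ^ p) ≤ X ^ (z + 1 - p) * (t ^ (p - 1) * exp (-t ^ p)) := by
  have hpred : ((p - 1 : ℕ) : ℤ) = p - 1 := by omega
  have h := zpow_le_zpow_mul_zpow_of_le hX hXt hz
  rw [← hpred, zpow_natCast, hpred, sub_sub_eq_add_sub] at h
  rw [← mul_assoc]
  gcongr

theorem integrableOn_Ioi_zpow_mul_exp_neg_pow (hp : p ≠ 0) {X : ℝ} (hX : 0 < X) {z : ℤ}
    (hz : z ≤ p - 1) :
    IntegrableOn (fun t : ℝ => t ^ z * exp (-t ^ p)) (Ioi X) := by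
  refine Integrable.mono' ((integrableOn_Ioi_pow_pred_mul_exp_neg_pow hp hX.le).const_mul
    (X ^ (z + 1 - p))) ?_ ?_
  · refine ContinuousOn.aestronglyMeasurable (fun t ht => ?_) measurableSet_Ioi
    have : t ≠ 0 := (hX.trans ht).ne'
    exact ((continuousAt_zpow₀ t z (Or.inl this)).mul (by fun_prop)).continuousWithinAt
  · filter_upwards [ae_restrict_mem measurableSet_Ioi] with t ht
    have : 0 < t := hX.trans ht
    rw [Real.norm_of_nonneg (by positivity)]
    exact zpow_mul_exp_neg_pow_le hp hX ht.le hz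

theorem integral_Ioi_zpow_mul_exp_neg_pow_le (hp : p ≠ 0) {X : ℝ} (hX : 0 < X) {z : ℤ}
    (hz : z ≤ p - 1) :
    ∫ t in Ioi X, t ^ z * exp (-t ^ p) ≤ X ^ (z + 1 - p) * (exp (-X ^ p) / p) := by
  rw [← integral_Ioi_pow_pred_mul_exp_neg_pow hp hX.le, ← integral_const_mul]
  exact setIntegral_mono_on (integrableOn_Ioi_zpow_mul_exp_neg_pow hp hX hz)
    ((integrableOn_Ioi_pow_pred_mul_exp_neg_pow hp hX.le).const_mul _) measurableSet_Ioi
    fun t ht => zpow_mul_exp_neg_pow_le hp hX ht.le hz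

theorem hasDerivAt_zpow_mul_neg_exp_neg_pow_div (hp : p ≠ 0) {t : ℝ} (ht : t ≠ 0) (z : ℤ) :
    HasDerivAt (fun t : ℝ => t ^ (z + 1 - p) * (-exp (-t ^ p) / p))
      (t ^ z * exp (-t ^ p) + ((p : ℝ) - z - 1) / p * (t ^ (z - p) * exp (-t ^ p))) t := by
  refine ((hasDerivAt_zpow (z + 1 - p) t (Or.inl ht)).mul
    (hasDerivAt_neg_exp_neg_pow_div hp t)).congr_deriv ?_
  have hpred : ((p - 1 : ℕ) : ℤ) = p - 1 := by omega
  rw [← zpow_natCast t (p - 1), hpred, mul_left_comm, ← mul_assoc (t ^ _), ← zpow_add₀ ht,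
    show z + 1 - p - 1 = z - p by ring, show (p : ℤ) - 1 + (z + 1 - p) = z by ring]
  field_simp [Nat.cast_ne_zero.mpr hp]
  push_cast
  ring

theorem integral_Ioi_zpow_mul_exp_neg_pow_eq (hp : p ≠ 0) {X : ℝ} (hX : 0 < X) {z : ℤ}
    (hz : z + 2 ≤ p) :
    ∫ t in Ioi X, t ^ z * exp (-t ^ p) = X ^ (z + 1 - p) * exp (-X ^ p) / p
      - ((p : ℝ) - z - 1) / p * ∫ t in Ioi X, t ^ (z - p) * exp (-t ^ p) := by
  have hint := integrableOn_Ioi_zpow_mul_exp_neg_pow hp hX (z := z) (by omega)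
  have hint' := integrableOn_Ioi_zpow_mul_exp_neg_pow hp hX (z := z - p) (by omega)
  have hibp := integral_Ioi_of_hasDerivAt_of_tendsto'
    (fun t ht => hasDerivAt_zpow_mul_neg_exp_neg_pow_div hp (hX.trans_le ht).ne' z)
    (hint.add (hint'.const_mul _))
    (by simpa using (tendsto_zpow_atTop_zero (by omega)).mul
          (tendsto_neg_exp_neg_pow_div_atTop hp))
  rw [integral_add hint (hint'.const_mul _), integral_const_mul] at hibp
  linear_combination hibp

end ExpNegPow

section RapidSpecialFunction

variable {p l : ℕ}

theorem hasDerivAt_exp_pow_mul_integral_Ioi (hl : l < p) {X : ℝ} (hX : 0 < X) :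
    HasDerivAt (fun X : ℝ => exp (X ^ p) * ∫ t in Ioi X, t ^ l * exp (-t ^ p))
      ((p : ℝ) * X ^ (p - 1) * (exp (X ^ p) * ∫ t in Ioi X, t ^ l * exp (-t ^ p)) - X ^ l)
      X := by
  have hint : IntegrableOn (fun t : ℝ => t ^ l * exp (-t ^ p)) (Ioi (X / 2)) := by
    simpa using integrableOn_Ioi_zpow_mul_exp_neg_pow (by omega) (half_pos hX) (z := l) (by omega)
  have htail := hasDerivAt_integral_Ioi hint (half_lt_self hX) (by fun_prop)
  refine ((hasDerivAt_pow p X).exp.mul htail).congr_deriv ?_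
  have hexp : exp (X ^ p) * exp (-X ^ p) = 1 := by rw [← exp_add, add_neg_cancel, exp_zero]
  linear_combination (-X ^ l) * hexp

theorem abs_exp_pow_mul_integral_Ioi_sub_le (hl : l + 2 ≤ p) {X : ℝ} (hX : 0 < X) :
    |exp (X ^ p) * (∫ t in Ioi X, t ^ l * exp (-t ^ p)) - X ^ ((l : ℤ) + 1 - p) / p| ≤
      ((p : ℝ) - l - 1) / p ^ 2 * X ^ ((l : ℤ) + 1 - 2 * p) := by
  have hp : p ≠ 0 := by omega
  set c := ((p : ℝ) - l - 1) / p
  set I := ∫ t in Ioi X, t ^ ((l : ℤ) - p) * exp (-t ^ p)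
  have hlp : (l : ℝ) + 2 ≤ p := by exact_mod_cast hl
  have hc : 0 ≤ c := div_nonneg (by linarith) (by positivity)
  have hexp : exp (X ^ p) * exp (-X ^ p) = 1 := by rw [← exp_add, add_neg_cancel, exp_zero]
  have hI : 0 ≤ I := setIntegral_nonneg measurableSet_Ioi
    fun t ht => by have : 0 < t := hX.trans ht; positivity
  have hIle : I ≤ X ^ ((l : ℤ) + 1 - 2 * p) * (exp (-X ^ p) / p) := by
    simpa [sub_add_eq_add_sub, two_mul, ← sub_sub] using
      integral_Ioi_zpow_mul_exp_neg_pow_le hp hX (z := (l : ℤ) - p) (by omega)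
  have hibp : exp (X ^ p) * (∫ t in Ioi X, t ^ l * exp (-t ^ p)) - X ^ ((l : ℤ) + 1 - p) / p
      = -(c * (exp (X ^ p) * I)) := by
    have := integral_Ioi_zpow_mul_exp_neg_pow_eq hp hX (z := l) (by omega)
    simp only [zpow_natCast, Int.cast_natCast] at this
    rw [this]
    linear_combination X ^ ((l : ℤ) + 1 - p) / p * hexp
  rw [hibp, abs_neg, abs_of_nonneg (by positivity)]
  calc c * (exp (X ^ p) * I)
      ≤ c * (exp (X ^ p) * (X ^ ((l : ℤ) + 1 - 2 * p) * (exp (-X ^ p) / p))) := by gcongr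
    _ = ((p : ℝ) - l - 1) / p ^ 2 * X ^ ((l : ℤ) + 1 - 2 * p) := by
        linear_combination ((p : ℝ) - l - 1) / p ^ 2 * X ^ ((l : ℤ) + 1 - 2 * p) * hexp

end RapidSpecialFunction

/-- For `p ≥ 2` and `0 ≤ l ≤ p-2`, the function
`Y(X) = e^{X^p} ∫_X^∞ t^l e^{-t^p} dt` satisfies `Y' = p X^{p-1} Y - X^l`
on `(0,∞)`, and `|Y(X) - X^{l+1-p}/p| ≤ ((p-l-1)/p²)·X^{l+1-2p}` for `X > 0`. -/
theorem rapid_special_function_estimate (p : ℕ) (hp : 2 ≤ p) (l : ℕ) (hl : l ≤ p - 2) :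
    (∀ X : ℝ, 0 < X →
      HasDerivAt (fun X : ℝ => Real.exp (X ^ p) * ∫ t in Set.Ioi X, t ^ l * Real.exp (-t ^ p))
        ((p : ℝ) * X ^ (p - 1) *
            (Real.exp (X ^ p) * ∫ t in Set.Ioi X, t ^ l * Real.exp (-t ^ p)) - X ^ l) X) ∧
    ∀ X : ℝ, 0 < X →
      |Real.exp (X ^ p) * (∫ t in Set.Ioi X, t ^ l * Real.exp (-t ^ p))
          - X ^ ((l : ℤ) + 1 - p) / p| ≤
        ((p : ℝ) - l - 1) / p ^ 2 * X ^ ((l : ℤ) + 1 - 2 * p) :=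
  ⟨fun _ hX => hasDerivAt_exp_pow_mul_integral_Ioi (by omega) hX,
    fun _ hX => abs_exp_pow_mul_integral_Ioi_sub_le (by omega) hX⟩
end

section
/- Let p ≥ 2 be an even integer and k : (-∞, 0] → ℂ continuous and bounded. Then Y(X) = e^{X^p} ∫_{-∞}^X e^{-t^p} k(t) dt is well defined, solves Y'(X) = p·X^{p−1}·Y(X) + k(X) on (-∞, 0], is the unique solution of this equation bounded on (-∞, 0], and satisfies sup_{X ≤ 0} |Y(X)| ≤ Γ(1 + 1/p)·sup|k|. -/
/-!
Variation of constants: `Y(X) = e^{φ(X)} ∫_{-∞}^X e^{-φ(t)} k(t) dt` solves `Y' = φ' Y + k`.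
For `φ(X) = X^p` with `p` even and `t ≤ X ≤ 0`, superadditivity of `s ↦ s^p` on `[0, ∞)` applied
to `|t| = (X - t) + |X|` gives `e^{X^p - t^p} ≤ e^{-(X - t)^p}`, hence
`‖Y X‖ ≤ sup ‖k‖ · ∫_0^∞ e^{-s^p} ds = Γ(1 + 1/p) · sup ‖k‖`.
Two bounded solutions differ by a bounded `W` with `W' = φ' W`; then `e^{-φ} W` is constant,
and it is bounded by `e^{-φ(x)} sup ‖W‖ → 0` as `x → -∞` because `φ(x) → ∞`.
-/

open MeasureTheory Set Filter

theorem integral_comp_sub_left_Iio {E : Type*} [NormedAddCommGroup E] [NormedSpace ℝ E]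
    (g : ℝ → E) (X : ℝ) : ∫ t in Iio X, g (X - t) = ∫ s in Ioi 0, g s := by
  have h := (Measure.measurePreserving_sub_left volume X).setIntegral_preimage_emb
    (measurableEmbedding_subLeft X) g (Ioi 0)
  rwa [preimage_const_sub_Ioi, sub_zero] at h

theorem MeasureTheory.IntegrableOn.comp_sub_left_Iio {E : Type*} [NormedAddCommGroup E]
    {g : ℝ → E} (hg : IntegrableOn g (Ioi 0)) (X : ℝ) :
    IntegrableOn (fun t => g (X - t)) (Iio X) := by
  have h := (Measure.measurePreserving_sub_left volume X).integrableOn_comp_preimage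
    (measurableEmbedding_subLeft X) (f := g) (s := Ioi 0)
  rw [preimage_const_sub_Ioi, sub_zero] at h
  exact h.mpr hg

theorem hasDerivWithinAt_integral_Iio {E : Type*} [NormedAddCommGroup E] [NormedSpace ℝ E]
    [CompleteSpace E] {f : ℝ → E} {a X : ℝ} (hf : ContinuousOn f (Iic a))
    (hfi : IntegrableOn f (Iio a)) (hX : X ≤ a) :
    HasDerivWithinAt (fun u => ∫ t in Iio u, f t) (f X) (Iic a) X := by
  have hsplit : ∀ u ∈ Iic a, ∫ t in Iio u, f t = (∫ t in Iio a, f t) + ∫ t in a..u, f t :=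
    fun u hu => eq_add_of_sub_eq' <|
      intervalIntegral.integral_Iio_sub_Iio' (hfi.mono_set (Iio_subset_Iio hu)) hfi
  have hint : IntervalIntegrable f volume a X :=
    (hf.mono (uIcc_of_ge hX ▸ Icc_subset_Iic_self)).intervalIntegrable
  have hFTC : HasDerivWithinAt (fun u => ∫ t in a..u, f t) (f X) (Iic a) X := by
    rcases hX.lt_or_eq with hlt | rfl
    · exact (intervalIntegral.integral_hasDerivAt_right hint
        ((hf.mono Iio_subset_Iic_self).stronglyMeasurableAtFilter isOpen_Iio X hlt)
        ((hf.mono Iio_subset_Iic_self).continuousAt (Iio_mem_nhds hlt))).hasDerivWithinAt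
    · exact intervalIntegral.integral_hasDerivWithinAt_right hint
        (hf.stronglyMeasurableAtFilter_nhdsWithin measurableSet_Iic X)
        (hf.continuousWithinAt self_mem_Iic)
  exact (hFTC.const_add _).congr hsplit (hsplit X hX)

noncomputable def integralSolution (φ : ℝ → ℝ) (k : ℝ → ℂ) (X : ℝ) : ℂ :=
  (Real.exp (φ X) : ℂ) * ∫ t in Iio X, (Real.exp (-φ t) : ℂ) * k t

section IntegralSolution

variable {φ φ' : ℝ → ℝ} {k : ℝ → ℂ} {a X : ℝ}

theorem hasDerivAt_ofReal_exp {c : ℝ} (hφ : HasDerivAt φ c X) :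
    HasDerivAt (fun x => (Real.exp (φ x) : ℂ)) (Real.exp (φ X) * c) X := by
  simpa using hφ.exp.ofReal_comp

theorem hasDerivWithinAt_integralSolution (hφ : ∀ x, HasDerivAt φ (φ' x) x)
    (hk : ContinuousOn k (Iic a))
    (hint : IntegrableOn (fun t => (Real.exp (-φ t) : ℂ) * k t) (Iio a)) (hX : X ≤ a) :
    HasDerivWithinAt (integralSolution φ k) (φ' X * integralSolution φ k X + k X) (Iic a) X := by
  have hφc : Continuous φ := continuous_iff_continuousAt.2 fun x => (hφ x).continuousAt
  have hcont : ContinuousOn (fun t => (Real.exp (-φ t) : ℂ) * k t) (Iic a) :=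
    (Continuous.continuousOn (by fun_prop)).mul hk
  have hprod := (hasDerivAt_ofReal_exp (hφ X)).hasDerivWithinAt.mul
    (hasDerivWithinAt_integral_Iio hcont hint hX)
  have hcancel : (Real.exp (φ X) : ℂ) * (Real.exp (-φ X) : ℂ) = 1 := by
    rw [← Complex.ofReal_mul, ← Real.exp_add, add_neg_cancel, Real.exp_zero, Complex.ofReal_one]
  refine hprod.congr_deriv ?_
  rw [integralSolution]
  linear_combination k X * hcancel

theorem eq_zero_of_hasDerivWithinAt_of_bounded (hφ : ∀ x, HasDerivAt φ (φ' x) x)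
    (hφ_atBot : Tendsto φ atBot atTop) {W : ℝ → ℂ}
    (hW : ∀ X ≤ a, HasDerivWithinAt W (φ' X * W X) (Iic a) X)
    (hWb : ∃ B, ∀ X ≤ a, ‖W X‖ ≤ B) (hX : X ≤ a) : W X = 0 := by
  obtain ⟨B, hB⟩ := hWb
  set G : ℝ → ℂ := fun x => (Real.exp (-φ x) : ℂ) * W x
  have hG' : ∀ x ∈ Iic a, HasDerivWithinAt G 0 (Iic a) x := fun x hx => by
    have := (hasDerivAt_ofReal_exp (hφ x).neg).hasDerivWithinAt.mul (hW x hx)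
    refine this.congr_deriv ?_
    push_cast
    ring
  have hG_const : ∀ x ≤ a, G x = G X := fun x hx => by
    have := (convex_Iic a).norm_image_sub_le_of_norm_hasDerivWithin_le hG'
      (fun _ _ => by rw [norm_zero]) hX hx
    rwa [zero_mul, norm_le_zero_iff, sub_eq_zero] at this
  have hG_le : ∀ x ≤ a, ‖G X‖ ≤ Real.exp (-φ x) * B := fun x hx => by
    rw [← hG_const x hx, norm_mul, Complex.norm_real, Real.norm_of_nonneg (Real.exp_pos _).le]
    exact mul_le_mul_of_nonneg_left (hB x hx) (Real.exp_pos _).le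
  have hlim : Tendsto (fun x => Real.exp (-φ x) * B) atBot (nhds 0) := by
    simpa using (Real.tendsto_exp_atBot.comp (tendsto_neg_atTop_atBot.comp hφ_atBot)).mul_const B
  have hG0 : G X = 0 :=
    norm_le_zero_iff.mp <| ge_of_tendsto hlim <| (eventually_le_atBot a).mono hG_le
  simpa [G, (Real.exp_pos _).ne'] using hG0

end IntegralSolution

section EvenPower

variable {p : ℕ}

theorem integral_exp_neg_pow_Ioi (hp : 0 < p) :
    ∫ s in Ioi (0 : ℝ), Real.exp (-s ^ p) = Real.Gamma (1 + 1 / p) := by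
  rw [add_comm, ← integral_exp_neg_rpow (Nat.cast_pos.mpr hp)]
  exact setIntegral_congr_fun measurableSet_Ioi fun s _ => by rw [Real.rpow_natCast]

theorem integrableOn_exp_neg_pow_Ioi (hp : 0 < p) :
    IntegrableOn (fun s : ℝ => Real.exp (-s ^ p)) (Ioi 0) := by
  refine (integrableOn_rpow_mul_exp_neg_rpow (s := 0) (by norm_num)
    (Nat.cast_pos.mpr hp)).congr_fun (fun s _ => ?_) measurableSet_Ioi
  simp only [Real.rpow_zero, one_mul, Real.rpow_natCast]

theorem integrableOn_exp_neg_pow_Iio (hp : 0 < p) (hpe : Even p) {X : ℝ} (hX : X ≤ 0) :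
    IntegrableOn (fun t : ℝ => Real.exp (-t ^ p)) (Iio X) := by
  have h := (integrableOn_exp_neg_pow_Ioi hp).comp_sub_left_Iio 0
  simp only [zero_sub, hpe.neg_pow] at h
  exact h.mono_set (Iio_subset_Iio hX)

theorem exp_pow_mul_exp_neg_pow_le (hp : p ≠ 0) (hpe : Even p) {t X : ℝ} (ht : t ≤ X)
    (hX : X ≤ 0) : Real.exp (X ^ p) * Real.exp (-t ^ p) ≤ Real.exp (-(X - t) ^ p) := by
  rw [← Real.exp_add, Real.exp_le_exp]
  have h := pow_add_pow_le (sub_nonneg.mpr ht) (neg_nonneg.mpr hX) hp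
  rw [show X - t + -X = -t by ring, hpe.neg_pow, hpe.neg_pow] at h
  linarith

variable {k : ℝ → ℂ} {M : ℝ}

theorem integrableOn_exp_neg_pow_mul (hp : 0 < p) (hpe : Even p) (hk : ContinuousOn k (Iic 0))
    (hM : ∀ t ≤ (0 : ℝ), ‖k t‖ ≤ M) {X : ℝ} (hX : X ≤ 0) :
    IntegrableOn (fun t => (Real.exp (-t ^ p) : ℂ) * k t) (Iio X) := by
  refine ((integrableOn_exp_neg_pow_Iio hp hpe hX).mul_const M).mono' ?_ ?_
  · exact ((Continuous.continuousOn (by fun_prop)).mul (hk.mono (Iio_subset_Iic_self.trans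
      (Iic_subset_Iic.mpr hX)))).aestronglyMeasurable measurableSet_Iio
  · filter_upwards [ae_restrict_mem measurableSet_Iio] with t ht
    rw [norm_mul, Complex.norm_real, Real.norm_of_nonneg (Real.exp_pos _).le]
    exact mul_le_mul_of_nonneg_left (hM t (ht.le.trans hX)) (Real.exp_pos _).le

theorem norm_integralSolution_pow_le (hp : 0 < p) (hpe : Even p) (hM : ∀ t ≤ (0 : ℝ), ‖k t‖ ≤ M)
    {X : ℝ} (hX : X ≤ 0) :
    ‖integralSolution (· ^ p) k X‖ ≤ Real.Gamma (1 + 1 / p) * M := by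
  have hdom : ∀ᵐ t ∂volume.restrict (Iio X),
      ‖(Real.exp (X ^ p) : ℂ) * ((Real.exp (-t ^ p) : ℂ) * k t)‖ ≤
        Real.exp (-(X - t) ^ p) * M := by
    filter_upwards [ae_restrict_mem measurableSet_Iio] with t ht
    rw [← mul_assoc, norm_mul, ← Complex.ofReal_mul, Complex.norm_real,
      Real.norm_of_nonneg (by positivity)]
    exact mul_le_mul (exp_pow_mul_exp_neg_pow_le hp.ne' hpe ht.le hX) (hM t (ht.le.trans hX))
      (norm_nonneg _) (Real.exp_pos _).le
  calc ‖integralSolution (· ^ p) k X‖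
      = ‖∫ t in Iio X, (Real.exp (X ^ p) : ℂ) * ((Real.exp (-t ^ p) : ℂ) * k t)‖ := by
        rw [integralSolution, integral_const_mul]
    _ ≤ ∫ t in Iio X, Real.exp (-(X - t) ^ p) * M :=
        norm_integral_le_of_norm_le
          (((integrableOn_exp_neg_pow_Ioi hp).comp_sub_left_Iio X).mul_const M) hdom
    _ = Real.Gamma (1 + 1 / p) * M := by
        rw [integral_comp_sub_left_Iio (fun s => Real.exp (-s ^ p) * M), integral_mul_const,
          integral_exp_neg_pow_Ioi hp]

theorem Even.tendsto_pow_atBot {R : Type*} [Ring R] [LinearOrder R] [IsStrictOrderedRing R]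
    (hpe : Even p) (hp : p ≠ 0) : Tendsto (fun x : R => x ^ p) atBot atTop := by
  refine ((tendsto_pow_atTop hp).comp tendsto_neg_atBot_atTop).congr fun x => ?_
  simp only [Function.comp_apply, hpe.neg_pow]

end EvenPower

/-- For `p ≥ 2` even and `k` continuous and bounded on `(-∞,0]`,
`Y(X) = e^{X^p} ∫_{-∞}^X e^{-t^p} k(t) dt` is well defined, solves
`Y' = p X^{p-1} Y + k(X)` on `(-∞,0]`, is the unique bounded solution there,
and satisfies `sup_{X≤0} ‖Y(X)‖ ≤ Γ(1 + 1/p)·sup‖k‖`. -/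
theorem rapid_part_bounded_solution (p : ℕ) (hp2 : 2 ≤ p) (hpeven : Even p)
    (k : ℝ → ℂ) (hk : ContinuousOn k (Set.Iic 0))
    (M : ℝ) (hM : ∀ X ≤ (0 : ℝ), ‖k X‖ ≤ M) :
    (∀ X ≤ (0 : ℝ),
      IntegrableOn (fun t => (Real.exp (-t ^ p) : ℂ) * k t) (Set.Iio X)) ∧
    (∀ X ≤ (0 : ℝ), HasDerivWithinAt
        (fun X : ℝ => (Real.exp (X ^ p) : ℂ) *
          ∫ t in Set.Iio X, (Real.exp (-t ^ p) : ℂ) * k t)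
        ((p : ℂ) * (X : ℂ) ^ (p - 1) *
            ((Real.exp (X ^ p) : ℂ) * ∫ t in Set.Iio X, (Real.exp (-t ^ p) : ℂ) * k t)
          + k X) (Set.Iic 0) X) ∧
    (∀ Z : ℝ → ℂ,
      (∀ X ≤ (0 : ℝ), HasDerivWithinAt Z
          ((p : ℂ) * (X : ℂ) ^ (p - 1) * Z X + k X) (Set.Iic 0) X) →
      (∃ B, ∀ X ≤ (0 : ℝ), ‖Z X‖ ≤ B) →
      ∀ X ≤ (0 : ℝ), Z X = (Real.exp (X ^ p) : ℂ) *
        ∫ t in Set.Iio X, (Real.exp (-t ^ p) : ℂ) * k t) ∧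
    (∀ X ≤ (0 : ℝ),
      ‖(Real.exp (X ^ p) : ℂ) * ∫ t in Set.Iio X, (Real.exp (-t ^ p) : ℂ) * k t‖ ≤
        Real.Gamma (1 + 1 / p) * M) := by
  have hp : 0 < p := by omega
  have hpow : ∀ x : ℝ, HasDerivAt (· ^ p) ((p : ℝ) * x ^ (p - 1)) x := fun x => hasDerivAt_pow p x
  have hint X (hX : X ≤ 0) := integrableOn_exp_neg_pow_mul hp hpeven hk hM hX
  have hbound X (hX : X ≤ 0) := norm_integralSolution_pow_le hp hpeven hM hX
  have hderiv : ∀ X ≤ (0 : ℝ), HasDerivWithinAt (integralSolution (· ^ p) k)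
      ((p : ℂ) * (X : ℂ) ^ (p - 1) * integralSolution (· ^ p) k X + k X) (Iic 0) X :=
    fun X hX => by
      simpa using hasDerivWithinAt_integralSolution hpow hk (hint 0 le_rfl) hX
  refine ⟨hint, hderiv, fun Z hZ ⟨B, hB⟩ X hX => ?_, hbound⟩
  set W := Z - integralSolution (· ^ p) k
  have hW : ∀ x ≤ (0 : ℝ), HasDerivWithinAt W (((p : ℝ) * x ^ (p - 1) : ℝ) * W x) (Iic 0) x :=
    fun x hx => ((hZ x hx).sub (hderiv x hx)).congr_deriv (by push_cast [W, Pi.sub_apply]; ring)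
  have hW_bdd : ∃ C, ∀ x ≤ (0 : ℝ), ‖W x‖ ≤ C :=
    ⟨B + Real.Gamma (1 + 1 / p) * M, fun x hx =>
      (norm_sub_le _ _).trans (add_le_add (hB x hx) (hbound x hx))⟩
  exact sub_eq_zero.mp <|
    eq_zero_of_hasDerivWithinAt_of_bounded hpow (hpeven.tendsto_pow_atBot hp.ne') hW hW_bdd hX
end
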